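/- Let I be a nonempty open real interval, let f,g : I → ℝ be twice differentiable functions on I with nonvanishing first derivatives, and let p = (p₁,p₂) : I → ℝ₊² and q = (q₁,q₂) : I → ℝ₊² be differentiable on I such that p₁/p₀ = q₂/q₀ and p₂/p₀ = q₁/q₀ hold on I. If ∂₁∂₂A_{f,p}(x,x) + ∂₁∂₂A_{g,q}(x,x) = 0 for all x ∈ I, then (p₁p₂)'/(p₁p₂) + f''/f' + (q₁q₂)'/(q₁q₂) + g''/g' = 0 on I. Consequently, there exists a nonzero constant δ such that p₁q₁ = p₂q₂ = √(δ/(f'g')) on I. -/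

import Mathlib

open Set

/-- The 2-variable generalized Bajraktarević mean
`A_{f,p}(x,y) = f⁻¹((p₁(x)f(x)+p₂(y)f(y))/(p₁(x)+p₂(y)))`,
where the inverse of `f` is taken on the interval `I`. -/
noncomputable def bajMean (I : Set ℝ) (f p₁ p₂ : ℝ → ℝ) (x y : ℝ) : ℝ :=
  Function.invFunOn f I ((p₁ x * f x + p₂ y * f y) / (p₁ x + p₂ y))

/-- Partial derivative with respect to the first variable. -/
noncomputable def pd1 (M : ℝ → ℝ → ℝ) (x y : ℝ) : ℝ := deriv (fun t => M t y) x

/-- Partial derivative with respect to the second variable. -/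
noncomputable def pd2 (M : ℝ → ℝ → ℝ) (x y : ℝ) : ℝ := deriv (fun t => M x t) y

/-!
Differentiating `f (A_{f,p}(x, y)) = (p₁ x f x + p₂ y f y) / (p₁ x + p₂ y)` once in each
variable and evaluating on the diagonal, where `A_{f,p}(x, x) = x`, gives
`∂₁∂₂A_{f,p}(x, x) = -(p₁p₂/p₀²)(x) · ((p₁p₂)'/(p₁p₂) + f''/f')(x)`.
The normalised weights of `q` are those of `p` swapped, so `p₁p₂/p₀² = q₁q₂/q₀² > 0` and
`p₁q₁ = p₂q₂`. Hence the hypothesis says that the logarithmic derivative of `p₁p₂ f' q₁q₂ g'`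
vanishes; this product is then a nonzero constant `δ`, and `(p₁q₁)² = p₁p₂q₁q₂ = δ/(f'g')`.
-/

open Function Filter Topology

lemma div_add_mem_uIcc {a b : ℝ} (ha : 0 ≤ a) (hb : 0 ≤ b) (hab : 0 < a + b) (y z : ℝ) :
    (a * y + b * z) / (a + b) ∈ uIcc y z := by
  rw [← segment_eq_uIcc]
  exact mem_segment_iff_div.mpr ⟨a, b, ha, hb, hab, by simp only [smul_eq_mul]; ring⟩

lemma mul_eq_mul_of_div_add_eq_div_add {a b c d : ℝ} (hab : a + b ≠ 0) (hcd : c + d ≠ 0)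
    (h : a / (a + b) = d / (c + d)) : a * c = b * d := by
  rw [div_eq_div_iff hab hcd] at h
  linear_combination h

lemma mul_div_add_sq_eq_of_div_add_eq_div_add {a b c d : ℝ} (hab : a + b ≠ 0)
    (hcd : c + d ≠ 0) (h : a / (a + b) = d / (c + d)) :
    a * b / (a + b) ^ 2 = c * d / (c + d) ^ 2 := by
  have hab' : a * b / (a + b) ^ 2 = a / (a + b) * (1 - a / (a + b)) := by
    field_simp; ring
  have hcd' : c * d / (c + d) ^ 2 = d / (c + d) * (1 - d / (c + d)) := by
    field_simp; ring
  rw [hab', hcd', h]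

lemma hasDerivAt_weightedMean {a b f g : ℝ → ℝ} {a' b' f' g' t : ℝ} (ha : HasDerivAt a a' t)
    (hb : HasDerivAt b b' t) (hf : HasDerivAt f f' t) (hg : HasDerivAt g g' t)
    (hab : a t + b t ≠ 0) :
    HasDerivAt (fun s => (a s * f s + b s * g s) / (a s + b s))
      ((a t * f' + b t * g') / (a t + b t) +
        (a' * b t - a t * b') * (f t - g t) / (a t + b t) ^ 2) t := by
  refine (((ha.fun_mul hf).fun_add (hb.fun_mul hg)).fun_div (ha.fun_add hb) hab).congr_deriv ?_
  field_simp
  ring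

lemma IsOpen.exists_mul_eq_const_of_logDeriv_add_eq_zero {I : Set ℝ} {a b c d : ℝ → ℝ}
    (hIopen : IsOpen I) (hIpre : IsPreconnected I) (hIne : I.Nonempty)
    (ha : ∀ x ∈ I, DifferentiableAt ℝ a x) (hb : ∀ x ∈ I, DifferentiableAt ℝ b x)
    (hc : ∀ x ∈ I, DifferentiableAt ℝ c x) (hd : ∀ x ∈ I, DifferentiableAt ℝ d x)
    (ha₀ : ∀ x ∈ I, a x ≠ 0) (hb₀ : ∀ x ∈ I, b x ≠ 0)
    (hc₀ : ∀ x ∈ I, c x ≠ 0) (hd₀ : ∀ x ∈ I, d x ≠ 0)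
    (hlog : ∀ x ∈ I, logDeriv a x + logDeriv b x + logDeriv c x + logDeriv d x = 0) :
    ∃ δ, δ ≠ 0 ∧ ∀ x ∈ I, a x * b x * c x * d x = δ := by
  have hab₀ : ∀ x ∈ I, a x * b x ≠ 0 := fun x hx => mul_ne_zero (ha₀ x hx) (hb₀ x hx)
  have habc₀ : ∀ x ∈ I, a x * b x * c x ≠ 0 := fun x hx => mul_ne_zero (hab₀ x hx) (hc₀ x hx)
  have hab : ∀ x ∈ I, DifferentiableAt ℝ (fun t => a t * b t) x := fun x hx =>
    (ha x hx).fun_mul (hb x hx)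
  have habc : ∀ x ∈ I, DifferentiableAt ℝ (fun t => a t * b t * c t) x := fun x hx =>
    (hab x hx).fun_mul (hc x hx)
  obtain ⟨δ, hδ⟩ := hIopen.exists_is_const_of_deriv_eq_zero hIpre
    (fun x hx => ((habc x hx).fun_mul (hd x hx)).differentiableWithinAt) fun x hx => by
      have hlog' : logDeriv (fun t => a t * b t * c t * d t) x = 0 := by
        rw [logDeriv_mul x (habc₀ x hx) (hd₀ x hx) (habc x hx) (hd x hx),
          logDeriv_mul x (hab₀ x hx) (hc₀ x hx) (hab x hx) (hc x hx),
          logDeriv_mul x (ha₀ x hx) (hb₀ x hx) (ha x hx) (hb x hx), hlog x hx]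
      rw [logDeriv_apply, div_eq_zero_iff] at hlog'
      exact hlog'.resolve_right (mul_ne_zero (habc₀ x hx) (hd₀ x hx))
  obtain ⟨x₀, hx₀⟩ := hIne
  exact ⟨δ, hδ x₀ hx₀ ▸ mul_ne_zero (habc₀ x₀ hx₀) (hd₀ x₀ hx₀), hδ⟩

section InverseFunction

variable {I : Set ℝ} {f : ℝ → ℝ}

lemma injOn_of_deriv_ne_zero (hIconn : I.OrdConnected) (hf' : ∀ x ∈ I, deriv f x ≠ 0) :
    InjOn f I := by
  have hderiv : ∀ x ∈ I, HasDerivWithinAt f (deriv f x) I x := fun x hx =>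
    (differentiableAt_of_deriv_ne_zero (hf' x hx)).hasDerivAt.hasDerivWithinAt
  have hcont : ContinuousOn f I := fun x hx => (hderiv x hx).continuousWithinAt
  rcases hasDerivWithinAt_forall_lt_or_forall_gt_of_forall_ne hIconn.convex hderiv hf'
    with hneg | hpos
  · exact (strictAntiOn_of_deriv_neg hIconn.convex hcont
      fun x hx => hneg x (interior_subset hx)).injOn
  · exact (strictMonoOn_of_deriv_pos hIconn.convex hcont
      fun x hx => hpos x (interior_subset hx)).injOn

lemma invFunOn_apply_eq (hIconn : I.OrdConnected) (hf' : ∀ x ∈ I, deriv f x ≠ 0)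
    {x : ℝ} (hx : x ∈ I) : invFunOn f I (f x) = x :=
  (injOn_of_deriv_ne_zero hIconn hf').leftInvOn_invFunOn hx

lemma hasDerivAt_invFunOn (hIopen : IsOpen I) (hIconn : I.OrdConnected)
    (hf' : ∀ x ∈ I, deriv f x ≠ 0) (hf'' : ∀ x ∈ I, DifferentiableAt ℝ (deriv f) x)
    {y : ℝ} (hy : y ∈ f '' I) :
    HasDerivAt (invFunOn f I) (deriv f (invFunOn f I y))⁻¹ y := by
  obtain ⟨x, hx, rfl⟩ := hy
  rw [invFunOn_apply_eq hIconn hf' hx]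
  -- continuity of `deriv f` upgrades the derivative to a strict one, as the inverse function
  -- theorem requires
  have hstrict : HasStrictDerivAt f (deriv f x) x :=
    hasStrictDerivAt_of_hasDerivAt_of_continuousAt
      (eventually_of_mem (hIopen.mem_nhds hx) fun s hs =>
        (differentiableAt_of_deriv_ne_zero (hf' s hs)).hasDerivAt)
      (hf'' x hx).continuousAt
  exact (hstrict.to_local_left_inverse (hf' x hx)
    (eventually_of_mem (hIopen.mem_nhds hx) fun s hs => invFunOn_apply_eq hIconn hf' hs)).hasDerivAt

end InverseFunction

section BajraktarevicMean

variable {I : Set ℝ} {f p₁ p₂ : ℝ → ℝ}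

lemma weightedMean_mem_image (hIconn : I.OrdConnected) (hf : ContinuousOn f I)
    (hp : ∀ x ∈ I, 0 < p₁ x ∧ 0 < p₂ x) {u v : ℝ} (hu : u ∈ I) (hv : v ∈ I) :
    (p₁ u * f u + p₂ v * f v) / (p₁ u + p₂ v) ∈ f '' I :=
  (hIconn.isPreconnected.image f hf).ordConnected.uIcc_subset (mem_image_of_mem f hu)
    (mem_image_of_mem f hv) (div_add_mem_uIcc (hp u hu).1.le (hp v hv).2.le
      (add_pos (hp u hu).1 (hp v hv).2) _ _)

lemma bajMean_self (hIconn : I.OrdConnected) (hf' : ∀ x ∈ I, deriv f x ≠ 0) {x : ℝ}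
    (hx : x ∈ I) (hpx : p₁ x + p₂ x ≠ 0) : bajMean I f p₁ p₂ x x = x := by
  rw [bajMean, ← add_mul, mul_div_cancel_left₀ _ hpx, invFunOn_apply_eq hIconn hf' hx]

lemma hasDerivAt_bajMean_right (hIopen : IsOpen I) (hIconn : I.OrdConnected)
    (hf' : ∀ x ∈ I, deriv f x ≠ 0) (hf'' : ∀ x ∈ I, DifferentiableAt ℝ (deriv f) x)
    (hp : ∀ x ∈ I, 0 < p₁ x ∧ 0 < p₂ x) (hp₂ : ∀ x ∈ I, DifferentiableAt ℝ p₂ x)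
    {u v : ℝ} (hu : u ∈ I) (hv : v ∈ I) :
    HasDerivAt (fun t => bajMean I f p₁ p₂ u t)
      ((p₂ v * deriv f v / (p₁ u + p₂ v) +
        p₁ u * deriv p₂ v * (f v - f u) / (p₁ u + p₂ v) ^ 2) /
          deriv f (bajMean I f p₁ p₂ u v)) v := by
  have hfc : ContinuousOn f I := fun x hx =>
    (differentiableAt_of_deriv_ne_zero (hf' x hx)).continuousAt.continuousWithinAt
  have hφ : HasDerivAt (invFunOn f I) (deriv f (bajMean I f p₁ p₂ u v))⁻¹
      ((p₁ u * f u + p₂ v * f v) / (p₁ u + p₂ v)) :=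
    hasDerivAt_invFunOn hIopen hIconn hf' hf'' (weightedMean_mem_image hIconn hfc hp hu hv)
  have hF := hasDerivAt_weightedMean (hasDerivAt_const v (p₁ u)) (hp₂ v hv).hasDerivAt
    (hasDerivAt_const v (f u)) (differentiableAt_of_deriv_ne_zero (hf' v hv)).hasDerivAt
    (add_pos (hp u hu).1 (hp v hv).2).ne'
  exact (hφ.comp v hF).congr_deriv (by ring)

lemma hasDerivAt_bajMean_left_self (hIopen : IsOpen I) (hIconn : I.OrdConnected)
    (hf' : ∀ x ∈ I, deriv f x ≠ 0) (hf'' : ∀ x ∈ I, DifferentiableAt ℝ (deriv f) x)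
    (hp : ∀ x ∈ I, 0 < p₁ x ∧ 0 < p₂ x) (hp₁ : ∀ x ∈ I, DifferentiableAt ℝ p₁ x)
    {x : ℝ} (hx : x ∈ I) :
    HasDerivAt (fun s => bajMean I f p₁ p₂ s x) (p₁ x / (p₁ x + p₂ x)) x := by
  have hS : p₁ x + p₂ x ≠ 0 := (add_pos (hp x hx).1 (hp x hx).2).ne'
  have hφ : HasDerivAt (invFunOn f I) (deriv f x)⁻¹ (f x) := by
    simpa only [invFunOn_apply_eq hIconn hf' hx] using
      hasDerivAt_invFunOn hIopen hIconn hf' hf'' (mem_image_of_mem f hx)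
  have hF := hasDerivAt_weightedMean (hp₁ x hx).hasDerivAt (hasDerivAt_const x (p₂ x))
    (differentiableAt_of_deriv_ne_zero (hf' x hx)).hasDerivAt (hasDerivAt_const x (f x)) hS
  refine (hφ.comp_of_eq x hF ?_).congr_deriv ?_
  · rw [← add_mul, mul_div_cancel_left₀ _ hS]
  · field_simp [hf' x hx]
    ring

lemma pd1_pd2_bajMean_self (hIopen : IsOpen I) (hIconn : I.OrdConnected)
    (hf' : ∀ x ∈ I, deriv f x ≠ 0) (hf'' : ∀ x ∈ I, DifferentiableAt ℝ (deriv f) x)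
    (hp : ∀ x ∈ I, 0 < p₁ x ∧ 0 < p₂ x)
    (hp₁ : ∀ x ∈ I, DifferentiableAt ℝ p₁ x) (hp₂ : ∀ x ∈ I, DifferentiableAt ℝ p₂ x)
    {x : ℝ} (hx : x ∈ I) :
    pd1 (pd2 (bajMean I f p₁ p₂)) x x = -(p₁ x * p₂ x / (p₁ x + p₂ x) ^ 2) *
      (logDeriv (fun t => p₁ t * p₂ t) x + logDeriv (deriv f) x) := by
  have hS : p₁ x + p₂ x ≠ 0 := (add_pos (hp x hx).1 (hp x hx).2).ne'
  have hMx : bajMean I f p₁ p₂ x x = x := bajMean_self hIconn hf' hx hS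
  have hpd2 : (fun s => pd2 (bajMean I f p₁ p₂) s x) =ᶠ[𝓝 x] fun s =>
      (p₂ x * deriv f x / (p₁ s + p₂ x) +
        p₁ s * deriv p₂ x * (f x - f s) / (p₁ s + p₂ x) ^ 2) / deriv f (bajMean I f p₁ p₂ s x) :=
    eventually_of_mem (hIopen.mem_nhds hx) fun s hs =>
      (hasDerivAt_bajMean_right hIopen hIconn hf' hf'' hp hp₂ hs hx).deriv
  have hp₁x := (hp₁ x hx).hasDerivAt
  have hnum : HasDerivAt (fun s => p₂ x * deriv f x / (p₁ s + p₂ x) +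
      p₁ s * deriv p₂ x * (f x - f s) / (p₁ s + p₂ x) ^ 2)
      (-(deriv p₁ x * p₂ x + p₁ x * deriv p₂ x) * deriv f x / (p₁ x + p₂ x) ^ 2) x := by
    refine (((hasDerivAt_const x _).fun_div (hp₁x.add_const _) hS).fun_add
      (((hp₁x.mul_const _).fun_mul ((differentiableAt_of_deriv_ne_zero
        (hf' x hx)).hasDerivAt.const_sub _)).fun_div ((hp₁x.add_const _).fun_pow 2)
          (pow_ne_zero 2 hS))).congr_deriv ?_
    field_simp
    ring
  have hden : HasDerivAt (fun s => deriv f (bajMean I f p₁ p₂ s x))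
      (deriv (deriv f) x * (p₁ x / (p₁ x + p₂ x))) x :=
    (hf'' x hx).hasDerivAt.comp_of_eq x
      (hasDerivAt_bajMean_left_self hIopen hIconn hf' hf'' hp hp₁ hx) hMx.symm
  rw [pd1, hpd2.deriv_eq, (hnum.fun_div hden (by rw [hMx]; exact hf' x hx)).deriv, hMx,
    logDeriv_apply, logDeriv_apply, deriv_fun_mul (hp₁ x hx) (hp₂ x hx)]
  field_simp [hf' x hx, (hp x hx).1.ne', (hp x hx).2.ne']
  ring

end BajraktarevicMean

theorem stmt10_general (I : Set ℝ) (hIopen : IsOpen I) (hIne : I.Nonempty) (hIconn : I.OrdConnected)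
    (f g p₁ p₂ q₁ q₂ : ℝ → ℝ)
    (hf2 : ∀ x ∈ I, DifferentiableAt ℝ (deriv f) x)
    (hf' : ∀ x ∈ I, deriv f x ≠ 0)
    (hg2 : ∀ x ∈ I, DifferentiableAt ℝ (deriv g) x)
    (hg' : ∀ x ∈ I, deriv g x ≠ 0)
    (hp : ∀ x ∈ I, 0 < p₁ x ∧ 0 < p₂ x)
    (hq : ∀ x ∈ I, 0 < q₁ x ∧ 0 < q₂ x)
    (hp1d : ∀ x ∈ I, DifferentiableAt ℝ p₁ x) (hp2d : ∀ x ∈ I, DifferentiableAt ℝ p₂ x)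
    (hq1d : ∀ x ∈ I, DifferentiableAt ℝ q₁ x) (hq2d : ∀ x ∈ I, DifferentiableAt ℝ q₂ x)
    (h1OC : ∀ x ∈ I, p₁ x / (p₁ x + p₂ x) = q₂ x / (q₁ x + q₂ x) ∧
      p₂ x / (p₁ x + p₂ x) = q₁ x / (q₁ x + q₂ x))
    (hsum : ∀ x ∈ I,
      pd1 (pd2 (bajMean I f p₁ p₂)) x x + pd1 (pd2 (bajMean I g q₁ q₂)) x x = 0) :
    (∀ x ∈ I,
      deriv (fun t => p₁ t * p₂ t) x / (p₁ x * p₂ x) + deriv (deriv f) x / deriv f x +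
      deriv (fun t => q₁ t * q₂ t) x / (q₁ x * q₂ x) + deriv (deriv g) x / deriv g x = 0) ∧
    (∃ δ : ℝ, δ ≠ 0 ∧ ∀ x ∈ I,
      p₁ x * q₁ x = Real.sqrt (δ / (deriv f x * deriv g x)) ∧
      p₂ x * q₂ x = Real.sqrt (δ / (deriv f x * deriv g x))) := by
  have hp₀ : ∀ x ∈ I, p₁ x + p₂ x ≠ 0 := fun x hx => (add_pos (hp x hx).1 (hp x hx).2).ne'
  have hq₀ : ∀ x ∈ I, q₁ x + q₂ x ≠ 0 := fun x hx => (add_pos (hq x hx).1 (hq x hx).2).ne'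
  have hlog : ∀ x ∈ I, logDeriv (fun t => p₁ t * p₂ t) x + logDeriv (deriv f) x +
      logDeriv (fun t => q₁ t * q₂ t) x + logDeriv (deriv g) x = 0 := by
    intro x hx
    have hw := mul_div_add_sq_eq_of_div_add_eq_div_add (hp₀ x hx) (hq₀ x hx) (h1OC x hx).1
    have hwpos : 0 < p₁ x * p₂ x / (p₁ x + p₂ x) ^ 2 := by
      obtain ⟨h₁, h₂⟩ := hp x hx
      positivity
    have hx' := hsum x hx
    rw [pd1_pd2_bajMean_self hIopen hIconn hf' hf2 hp hp1d hp2d hx,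
      pd1_pd2_bajMean_self hIopen hIconn hg' hg2 hq hq1d hq2d hx, ← hw] at hx'
    have hprod : p₁ x * p₂ x / (p₁ x + p₂ x) ^ 2 * (logDeriv (fun t => p₁ t * p₂ t) x +
        logDeriv (deriv f) x + logDeriv (fun t => q₁ t * q₂ t) x + logDeriv (deriv g) x) = 0 := by
      linear_combination -hx'
    exact (mul_eq_zero.1 hprod).resolve_left hwpos.ne'
  refine ⟨hlog, ?_⟩
  obtain ⟨δ, hδ₀, hδ⟩ := hIopen.exists_mul_eq_const_of_logDeriv_add_eq_zero
    hIconn.isPreconnected hIne (fun x hx => (hp1d x hx).fun_mul (hp2d x hx)) hf2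
    (fun x hx => (hq1d x hx).fun_mul (hq2d x hx)) hg2
    (fun x hx => mul_ne_zero (hp x hx).1.ne' (hp x hx).2.ne') hf'
    (fun x hx => mul_ne_zero (hq x hx).1.ne' (hq x hx).2.ne') hg' hlog
  refine ⟨δ, hδ₀, fun x hx => ?_⟩
  have hpq := mul_eq_mul_of_div_add_eq_div_add (hp₀ x hx) (hq₀ x hx) (h1OC x hx).1
  have hsq : δ / (deriv f x * deriv g x) = (p₁ x * q₁ x) ^ 2 := by
    rw [← hδ x hx, div_eq_iff (mul_ne_zero (hf' x hx) (hg' x hx))]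
    linear_combination -(p₁ x * q₁ x * deriv f x * deriv g x) * hpq
  rw [hsq, Real.sqrt_sq (mul_pos (hp x hx).1 (hq x hx).1).le]
  exact ⟨rfl, hpq.symm⟩

theorem stmt10 (I : Set ℝ) (hIopen : IsOpen I) (hIne : I.Nonempty) (hIconn : I.OrdConnected)
    (f g p₁ p₂ q₁ q₂ : ℝ → ℝ)
    (hf1 : ∀ x ∈ I, DifferentiableAt ℝ f x)
    (hf2 : ∀ x ∈ I, DifferentiableAt ℝ (deriv f) x)
    (hf' : ∀ x ∈ I, deriv f x ≠ 0)
    (hg1 : ∀ x ∈ I, DifferentiableAt ℝ g x)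
    (hg2 : ∀ x ∈ I, DifferentiableAt ℝ (deriv g) x)
    (hg' : ∀ x ∈ I, deriv g x ≠ 0)
    (hp : ∀ x ∈ I, 0 < p₁ x ∧ 0 < p₂ x)
    (hq : ∀ x ∈ I, 0 < q₁ x ∧ 0 < q₂ x)
    (hp1d : ∀ x ∈ I, DifferentiableAt ℝ p₁ x) (hp2d : ∀ x ∈ I, DifferentiableAt ℝ p₂ x)
    (hq1d : ∀ x ∈ I, DifferentiableAt ℝ q₁ x) (hq2d : ∀ x ∈ I, DifferentiableAt ℝ q₂ x)
    (h1OC : ∀ x ∈ I, p₁ x / (p₁ x + p₂ x) = q₂ x / (q₁ x + q₂ x) ∧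
      p₂ x / (p₁ x + p₂ x) = q₁ x / (q₁ x + q₂ x))
    (hsum : ∀ x ∈ I,
      pd1 (pd2 (bajMean I f p₁ p₂)) x x + pd1 (pd2 (bajMean I g q₁ q₂)) x x = 0) :
    (∀ x ∈ I,
      deriv (fun t => p₁ t * p₂ t) x / (p₁ x * p₂ x) + deriv (deriv f) x / deriv f x +
      deriv (fun t => q₁ t * q₂ t) x / (q₁ x * q₂ x) + deriv (deriv g) x / deriv g x = 0) ∧
    (∃ δ : ℝ, δ ≠ 0 ∧ ∀ x ∈ I,
      p₁ x * q₁ x = Real.sqrt (δ / (deriv f x * deriv g x)) ∧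
      p₂ x * q₂ x = Real.sqrt (δ / (deriv f x * deriv g x))) :=
  stmt10_general I hIopen hIne hIconn f g p₁ p₂ q₁ q₂ hf2 hf' hg2 hg' hp hq hp1d hp2d hq1d hq2d h1OC
    hsum
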